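/- Let 𝒞 ⊂ ℝ^m be countable, let p_S be a probability mass function on 𝒞 with H_{1/2} := 2 log Σ_{c∈𝒞} √(p_S(c)) < ∞. Let σ > 0 and let φ be the density of N(0, σ²I_m). Define for x ∈ ℝ^m the posterior p(c|x) = p_S(c)φ(x−c)/Σ_u p_S(u)φ(x−u), and the posterior-resampling kernel K(c, c*) = ∫_{ℝ^m} p(c|x) φ(x−c*) dx. Then for every r > 0, Σ_{c*∈𝒞} p_S(c*) Σ_{c∈𝒞 : ‖c−c*‖ ≥ r} K(c, c*) ≤ (1/2) exp( H_{1/2} − r²/(8σ²) ). -/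

import Mathlib

open MeasureTheory Classical

/-!
For `i ≠ j`, write `aₖ(x) = p(k) φ(x − cₖ)` and `Z(x) = Σᵤ aᵤ(x) ≥ aᵢ + aⱼ`. Then
`p(j) K(i, j) = ∫ aᵢ aⱼ / Z ≤ ½ ∫ √(aᵢ aⱼ)` by AM–GM, and completing the square gives
`√(φ(x − cᵢ) φ(x − cⱼ)) = φ(x − (cᵢ + cⱼ)/2) · exp(−‖cᵢ − cⱼ‖²/(8σ²))`, so that
`p(j) K(i, j) ≤ ½ √(p(i) p(j)) exp(−‖cᵢ − cⱼ‖²/(8σ²))`. Summing over the pairs at distance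
at least `r` gives at most `½ exp(−r²/(8σ²)) (Σ √p)² = ½ exp(H_{1/2} − r²/(8σ²))`.
-/

/-- The density of the Gaussian distribution `N(0, σ² I_m)` on `ℝ^m`
(with `t = σ²` the variance). -/
noncomputable def gaussDensity (m : ℕ) (t : ℝ) (u : EuclideanSpace ℝ (Fin m)) : ℝ :=
  (2 * Real.pi * t) ^ (-(m : ℝ) / 2) * Real.exp (-‖u‖ ^ 2 / (2 * t))

noncomputable def gaussPosterior (m : ℕ) (t : ℝ) {ι : Type*} (p : ι → ℝ)
    (c : ι → EuclideanSpace ℝ (Fin m)) (i : ι) (x : EuclideanSpace ℝ (Fin m)) : ℝ :=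
  p i * gaussDensity m t (x - c i) / ∑' u, p u * gaussDensity m t (x - c u)

lemma div_mul_le_half_sqrt_mul {a b z : ℝ} (ha : 0 ≤ a) (hb : 0 ≤ b) (hz : a + b ≤ z) :
    a / z * b ≤ 2⁻¹ * Real.sqrt (a * b) := by
  have hamgm : 2 * Real.sqrt (a * b) ≤ z := by
    rw [Real.sqrt_mul ha]
    nlinarith [sq_nonneg (Real.sqrt a - Real.sqrt b), Real.sq_sqrt ha, Real.sq_sqrt hb]
  rcases (show 0 ≤ z by linarith).eq_or_lt with rfl | hz0
  · simp only [div_zero, zero_mul]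
    positivity
  rw [div_mul_eq_mul_div, div_le_iff₀ hz0]
  nlinarith [Real.mul_self_sqrt (mul_nonneg ha hb), Real.sqrt_nonneg (a * b)]

lemma tsum_tsum_le_mul_sq_tsum {ι : Type*} {A : ι → ι → ℝ} {w : ι → ℝ} {B : ℝ}
    (hA0 : ∀ i j, 0 ≤ A i j) (hA : ∀ i j, A i j ≤ B * (w i * w j)) (hw : Summable w) :
    ∑' j, ∑' i, A i j ≤ B * (∑' i, w i) ^ 2 := by
  have hinner : ∀ j, ∑' i, A i j ≤ B * (∑' i, w i) * w j := fun j => by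
    have hmaj : Summable fun i => B * (w i * w j) := (hw.mul_right _).mul_left _
    calc ∑' i, A i j ≤ ∑' i, B * (w i * w j) :=
          (hmaj.of_nonneg_of_le (hA0 · j) (hA · j)).tsum_le_tsum (hA · j) hmaj
      _ = B * (∑' i, w i) * w j := by rw [tsum_mul_left, tsum_mul_right, mul_assoc]
  have hmaj : Summable fun j => B * (∑' i, w i) * w j := hw.mul_left _
  calc ∑' j, ∑' i, A i j ≤ ∑' j, B * (∑' i, w i) * w j :=
        (hmaj.of_nonneg_of_le (fun j => tsum_nonneg (hA0 · j)) hinner).tsum_le_tsum hinner hmaj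
    _ = B * (∑' i, w i) ^ 2 := by rw [tsum_mul_left, sq, mul_assoc]

section gaussDensity

variable {m : ℕ} {t : ℝ}

lemma gaussDensity_pos (ht : 0 < t) (u : EuclideanSpace ℝ (Fin m)) : 0 < gaussDensity m t u := by
  unfold gaussDensity
  positivity

lemma gaussDensity_le (ht : 0 < t) (u : EuclideanSpace ℝ (Fin m)) :
    gaussDensity m t u ≤ (2 * Real.pi * t) ^ (-(m : ℝ) / 2) := by
  refine mul_le_of_le_one_right (by positivity) (Real.exp_le_one_iff.mpr ?_)
  exact div_nonpos_of_nonpos_of_nonneg (neg_nonpos.mpr (sq_nonneg _)) (by positivity)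

lemma gaussDensity_eq (u : EuclideanSpace ℝ (Fin m)) :
    gaussDensity m t u = (2 * Real.pi * t) ^ (-(m : ℝ) / 2) * Real.exp (-(1 / (2 * t)) * ‖u‖ ^ 2) := by
  unfold gaussDensity
  ring_nf

lemma integrable_gaussDensity_sub (ht : 0 < t) (w : EuclideanSpace ℝ (Fin m)) :
    Integrable fun x => gaussDensity m t (x - w) := by
  have hb : (0 : ℝ) < 1 / (2 * t) := by positivity
  have hexp : Integrable fun v : EuclideanSpace ℝ (Fin m) => Real.exp (-(1 / (2 * t)) * ‖v‖ ^ 2) := by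
    refine (GaussianFourier.integrable_cexp_neg_mul_sq_norm_add (V := EuclideanSpace ℝ (Fin m))
      (b := ((1 / (2 * t) : ℝ) : ℂ)) (by simpa using hb) 0 0).norm.congr (.of_forall fun v => ?_)
    simp [Complex.norm_exp, ← Complex.ofReal_pow]
  simp_rw [gaussDensity_eq]
  exact (hexp.const_mul _).comp_sub_right w

lemma integral_gaussDensity_sub (ht : 0 < t) (w : EuclideanSpace ℝ (Fin m)) :
    ∫ x, gaussDensity m t (x - w) = 1 := by
  have h2πt : (0 : ℝ) < 2 * Real.pi * t := by positivity
  rw [integral_sub_right_eq_self (fun x => gaussDensity m t x) w]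
  simp_rw [gaussDensity_eq]
  rw [integral_const_mul, GaussianFourier.integral_rexp_neg_mul_sq_norm (by positivity),
    finrank_euclideanSpace_fin, show Real.pi / (1 / (2 * t)) = 2 * Real.pi * t by field_simp,
    ← Real.rpow_add h2πt, neg_div, neg_add_cancel, Real.rpow_zero]

/-- Completing the square in the exponent, via the parallelogram law. -/
lemma sqrt_gaussDensity_mul (ht : 0 < t) (u v : EuclideanSpace ℝ (Fin m)) :
    Real.sqrt (gaussDensity m t u * gaussDensity m t v)
      = gaussDensity m t ((2 : ℝ)⁻¹ • (u + v)) * Real.exp (-‖u - v‖ ^ 2 / (8 * t)) := by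
  have hexponent : -‖u‖ ^ 2 / (2 * t) + -‖v‖ ^ 2 / (2 * t)
      = 2 * (-‖(2 : ℝ)⁻¹ • (u + v)‖ ^ 2 / (2 * t) + -‖u - v‖ ^ 2 / (8 * t)) := by
    have hpar := parallelogram_law_with_norm ℝ u v
    rw [norm_smul, mul_pow, Real.norm_of_nonneg (by norm_num)]
    field_simp
    linear_combination 8 * hpar
  have hsq : gaussDensity m t u * gaussDensity m t v
      = (gaussDensity m t ((2 : ℝ)⁻¹ • (u + v)) * Real.exp (-‖u - v‖ ^ 2 / (8 * t))) ^ 2 := by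
    unfold gaussDensity
    have hexp_two_mul (y : ℝ) : Real.exp (2 * y) = Real.exp y ^ 2 := by
      exact_mod_cast Real.exp_nat_mul y 2
    rw [mul_mul_mul_comm, ← Real.exp_add, hexponent, hexp_two_mul, Real.exp_add]
    ring
  rw [hsq, Real.sqrt_sq (by have := gaussDensity_pos ht ((2 : ℝ)⁻¹ • (u + v)); positivity)]

end gaussDensity

section gaussPosterior

variable {m : ℕ} {t : ℝ} {ι : Type*} {p : ι → ℝ} {c : ι → EuclideanSpace ℝ (Fin m)}

lemma summable_mul_gaussDensity (ht : 0 < t) (hp0 : ∀ i, 0 ≤ p i) (hp : Summable p)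
    (x : EuclideanSpace ℝ (Fin m)) : Summable fun u => p u * gaussDensity m t (x - c u) :=
  (hp.mul_right _).of_nonneg_of_le (fun u => mul_nonneg (hp0 u) (gaussDensity_pos ht _).le)
    (fun u => mul_le_mul_of_nonneg_left (gaussDensity_le ht _) (hp0 u))

lemma gaussPosterior_nonneg (ht : 0 < t) (hp0 : ∀ i, 0 ≤ p i) (i : ι)
    (x : EuclideanSpace ℝ (Fin m)) : 0 ≤ gaussPosterior m t p c i x :=
  div_nonneg (mul_nonneg (hp0 i) (gaussDensity_pos ht _).le)
    (tsum_nonneg fun u => mul_nonneg (hp0 u) (gaussDensity_pos ht _).le)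

lemma mul_gaussPosterior_mul_le (ht : 0 < t) (hp0 : ∀ i, 0 ≤ p i) (hp : Summable p)
    {i j : ι} (hij : i ≠ j) (x : EuclideanSpace ℝ (Fin m)) :
    p j * (gaussPosterior m t p c i x * gaussDensity m t (x - c j))
      ≤ 2⁻¹ * (Real.sqrt (p i) * Real.sqrt (p j)) * Real.exp (-‖c i - c j‖ ^ 2 / (8 * t))
        * gaussDensity m t (x - (2 : ℝ)⁻¹ • (c i + c j)) := by
  have ha := mul_nonneg (hp0 i) (gaussDensity_pos ht (x - c i)).le
  have hb := mul_nonneg (hp0 j) (gaussDensity_pos ht (x - c j)).le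
  have hpair : p i * gaussDensity m t (x - c i) + p j * gaussDensity m t (x - c j)
      ≤ ∑' u, p u * gaussDensity m t (x - c u) := by
    have := (summable_mul_gaussDensity (c := c) ht hp0 hp x).sum_le_tsum {i, j}
      fun u _ => mul_nonneg (hp0 u) (gaussDensity_pos ht _).le
    rwa [Finset.sum_pair hij] at this
  have hsqrt := sqrt_gaussDensity_mul ht (x - c i) (x - c j)
  rw [show (2 : ℝ)⁻¹ • (x - c i + (x - c j)) = x - (2 : ℝ)⁻¹ • (c i + c j) by module,
    sub_sub_sub_cancel_left, norm_sub_rev] at hsqrt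
  calc p j * (gaussPosterior m t p c i x * gaussDensity m t (x - c j))
      = p i * gaussDensity m t (x - c i) / (∑' u, p u * gaussDensity m t (x - c u))
          * (p j * gaussDensity m t (x - c j)) := by
        unfold gaussPosterior
        ring
    _ ≤ 2⁻¹ * Real.sqrt (p i * gaussDensity m t (x - c i) * (p j * gaussDensity m t (x - c j))) :=
        div_mul_le_half_sqrt_mul ha hb hpair
    _ = _ := by
        rw [mul_mul_mul_comm, Real.sqrt_mul (mul_nonneg (hp0 i) (hp0 j)), Real.sqrt_mul (hp0 i),
          hsqrt]
        ring

lemma mul_integral_gaussPosterior_mul_le (ht : 0 < t) (hp0 : ∀ i, 0 ≤ p i) (hp : Summable p)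
    {i j : ι} (hij : i ≠ j) :
    p j * ∫ x, gaussPosterior m t p c i x * gaussDensity m t (x - c j)
      ≤ 2⁻¹ * (Real.sqrt (p i) * Real.sqrt (p j)) * Real.exp (-‖c i - c j‖ ^ 2 / (8 * t)) := by
  rw [← integral_const_mul]
  calc ∫ x, p j * (gaussPosterior m t p c i x * gaussDensity m t (x - c j))
      ≤ ∫ x, 2⁻¹ * (Real.sqrt (p i) * Real.sqrt (p j)) * Real.exp (-‖c i - c j‖ ^ 2 / (8 * t))
          * gaussDensity m t (x - (2 : ℝ)⁻¹ • (c i + c j)) :=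
        integral_mono_of_nonneg (.of_forall fun x => mul_nonneg (hp0 j)
            (mul_nonneg (gaussPosterior_nonneg ht hp0 i x) (gaussDensity_pos ht _).le))
          ((integrable_gaussDensity_sub ht _).const_mul _)
          (.of_forall (mul_gaussPosterior_mul_le ht hp0 hp hij))
    _ = _ := by rw [integral_const_mul, integral_gaussDensity_sub ht, mul_one]

lemma mul_ite_integral_gaussPosterior_mul_nonneg (ht : 0 < t) (hp0 : ∀ i, 0 ≤ p i) (r : ℝ)
    (i j : ι) :
    0 ≤ p j * (if r ≤ ‖c i - c j‖ then ∫ x, gaussPosterior m t p c i x * gaussDensity m t (x - c j)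
      else 0) := by
  refine mul_nonneg (hp0 j) ?_
  split_ifs
  exacts [integral_nonneg fun x => mul_nonneg (gaussPosterior_nonneg ht hp0 i x)
    (gaussDensity_pos ht _).le, le_rfl]

lemma mul_ite_integral_gaussPosterior_mul_le (ht : 0 < t) (hp0 : ∀ i, 0 ≤ p i) (hp : Summable p)
    {r : ℝ} (hr : 0 < r) (i j : ι) :
    p j * (if r ≤ ‖c i - c j‖ then ∫ x, gaussPosterior m t p c i x * gaussDensity m t (x - c j)
      else 0) ≤ 2⁻¹ * Real.exp (-r ^ 2 / (8 * t)) * (Real.sqrt (p i) * Real.sqrt (p j)) := by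
  split_ifs with hdist
  · have hij : i ≠ j := by
      rintro rfl
      simp only [sub_self, norm_zero] at hdist
      linarith
    calc _ ≤ 2⁻¹ * (Real.sqrt (p i) * Real.sqrt (p j)) * Real.exp (-‖c i - c j‖ ^ 2 / (8 * t)) :=
          mul_integral_gaussPosterior_mul_le ht hp0 hp hij
      _ ≤ 2⁻¹ * (Real.sqrt (p i) * Real.sqrt (p j)) * Real.exp (-r ^ 2 / (8 * t)) := by gcongr
      _ = _ := by ring
  · rw [mul_zero]
    positivity

end gaussPosterior

theorem stmt12_general (m : ℕ) {ι : Type*}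
    (c : ι → EuclideanSpace ℝ (Fin m))
    (pS : ι → ℝ) (hpS0 : ∀ i, 0 ≤ pS i) (hpS1 : ∑' i, pS i = 1)
    (hsqrt : Summable fun i => Real.sqrt (pS i))
    (Hhalf : ℝ) (hHhalf : Hhalf = 2 * Real.log (∑' i, Real.sqrt (pS i)))
    (σ : ℝ) (hσ : 0 < σ)
    (post : ι → EuclideanSpace ℝ (Fin m) → ℝ)
    (hpost : post = fun i x => pS i * gaussDensity m (σ ^ 2) (x - c i)
        / ∑' u, pS u * gaussDensity m (σ ^ 2) (x - c u))
    (K : ι → ι → ℝ)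
    (hK : K = fun i istar =>
        ∫ x : EuclideanSpace ℝ (Fin m), post i x * gaussDensity m (σ ^ 2) (x - c istar)) :
    ∀ r : ℝ, 0 < r →
      (∑' istar, pS istar * ∑' i, (if r ≤ ‖c i - c istar‖ then K i istar else 0))
        ≤ (1 / 2) * Real.exp (Hhalf - r ^ 2 / (8 * σ ^ 2)) := by
  intro r hr
  subst hpost hK hHhalf
  have ht : 0 < σ ^ 2 := by positivity
  have hpS : Summable pS := by
    by_contra h
    rw [tsum_eq_zero_of_not_summable h] at hpS1
    exact zero_ne_one hpS1
  set S := ∑' i, Real.sqrt (pS i)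
  have hS : 0 < S := by
    obtain ⟨i, hi⟩ : ∃ i, pS i ≠ 0 := not_forall.mp fun h => by simp [h] at hpS1
    exact (Real.sqrt_pos.mpr ((hpS0 i).lt_of_ne' hi)).trans_le
      (hsqrt.le_tsum i fun j _ => Real.sqrt_nonneg _)
  calc _ = ∑' j, ∑' i, pS j * (if r ≤ ‖c i - c j‖
        then ∫ x, gaussPosterior m (σ ^ 2) pS c i x * gaussDensity m (σ ^ 2) (x - c j) else 0) := by
        simp_rw [tsum_mul_left]
        rfl
    _ ≤ 2⁻¹ * Real.exp (-r ^ 2 / (8 * σ ^ 2)) * S ^ 2 :=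
        tsum_tsum_le_mul_sq_tsum (mul_ite_integral_gaussPosterior_mul_nonneg ht hpS0 r)
          (mul_ite_integral_gaussPosterior_mul_le ht hpS0 hpS hr) hsqrt
    _ = _ := by
        rw [sub_eq_add_neg, Real.exp_add, ← neg_div, show (2 : ℝ) * Real.log S = Real.log (S ^ 2) by
          rw [Real.log_pow]; norm_num, Real.exp_log (pow_pos hS 2)]
        ring

/-- tail bound for the posterior-resampling kernel: for a countable
codebook `{c i} ⊂ ℝ^m` with pmf `p_S` of finite order-1/2 Rényi entropy `H_{1/2}`,
posterior `p(c|x)` of the Gaussian channel with noise `N(0, σ² I_m)` and resampling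
kernel `K(c, c*) = ∫ p(c|x) φ(x−c*) dx`, for every `r > 0`,
`Σ_{c*} p_S(c*) Σ_{c : ‖c−c*‖ ≥ r} K(c, c*) ≤ (1/2) exp(H_{1/2} − r²/(8σ²))`. -/
theorem stmt12 (m : ℕ) {ι : Type*} [Countable ι]
    (c : ι → EuclideanSpace ℝ (Fin m)) (hc : Function.Injective c)
    (pS : ι → ℝ) (hpS0 : ∀ i, 0 ≤ pS i) (hpS1 : ∑' i, pS i = 1)
    (hsqrt : Summable fun i => Real.sqrt (pS i))
    (Hhalf : ℝ) (hHhalf : Hhalf = 2 * Real.log (∑' i, Real.sqrt (pS i)))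
    (σ : ℝ) (hσ : 0 < σ)
    (post : ι → EuclideanSpace ℝ (Fin m) → ℝ)
    (hpost : post = fun i x => pS i * gaussDensity m (σ ^ 2) (x - c i)
        / ∑' u, pS u * gaussDensity m (σ ^ 2) (x - c u))
    (K : ι → ι → ℝ)
    (hK : K = fun i istar =>
        ∫ x : EuclideanSpace ℝ (Fin m), post i x * gaussDensity m (σ ^ 2) (x - c istar)) :
    ∀ r : ℝ, 0 < r →
      (∑' istar, pS istar * ∑' i, (if r ≤ ‖c i - c istar‖ then K i istar else 0))
        ≤ (1 / 2) * Real.exp (Hhalf - r ^ 2 / (8 * σ ^ 2)) :=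
  stmt12_general m c pS hpS0 hpS1 hsqrt Hhalf hHhalf σ hσ post hpost K hK
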